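/- For every m ≥ 1 and all data 0 < z_1 < … < z_m, the truncated MDI prior for the Generalized Pareto distribution, corresponding to π(ξ) = e^{−(ξ+1)} for ξ ≥ −1 and π(ξ) = 0 for ξ < −1, yields a proper posterior: C_m(π; z) < ∞. -/

import Mathlib

open MeasureTheory Real Set
open scoped ENNReal Classical

/-- The inner integral over the scale `σ` of the Generalized Pareto posterior
integrand, for a fixed shape `ξ`, data `z` and prior `π(σ,ξ) ∝ π(ξ)/σ`:
`∫_{max(0, -ξ z_m)}^∞ σ^{-(m+1)} ∏_{i=1}^m (1 + ξ z_i/σ)^{-(1+1/ξ)} dσ`,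
with the Gumbel interpretation `σ^{-(m+1)} exp(-(Σ_i z_i)/σ)` when `ξ = 0`. -/
noncomputable def gpInner (m : ℕ) (z : Fin m → ℝ) (ξ : ℝ) : ℝ≥0∞ :=
  ∫⁻ σ in Set.Ioi (max 0 (-ξ * ⨆ i, z i)),
    ENNReal.ofReal
      (if ξ = 0 then σ ^ (-((m : ℝ) + 1)) * Real.exp (-(∑ i, z i) / σ)
       else σ ^ (-((m : ℝ) + 1)) * ∏ i, (1 + ξ * z i / σ) ^ (-(1 + 1 / ξ)))

/-- The Generalized Pareto posterior normalizing constant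
`C_m(π; z) = ∫_ℝ π(ξ) ∫_{max(0,-ξ z_m)}^∞ σ^{-(m+1)} ∏_i (1+ξ z_i/σ)^{-(1+1/ξ)} dσ dξ`. -/
noncomputable def gpC (m : ℕ) (z : Fin m → ℝ) (p : ℝ → ℝ) : ℝ≥0∞ :=
  ∫⁻ ξ : ℝ, ENNReal.ofReal (p ξ) * gpInner m z ξ

/-!
The inner integral `gpInner m z ξ` is bounded uniformly in `ξ ≥ -1`, and the truncated exponential
prior is integrable.

For `-1 ≤ ξ < 0`, `log (1 + ξ x) ≤ ξ x` bounds the likelihood by `exp (-(1 + ξ) Σ zᵢ / σ)`; when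
`ξ ≤ -1/2` the support `σ > -ξ max zᵢ ≥ max zᵢ / 2` stays away from `0`, otherwise this exponential
gives the decay at `0`. For `ξ > 0` the likelihood is at most `(1 + a/σ)^(-(m + b))` with
`a = ξ min zᵢ` and `b = m/ξ`. On `σ ≥ a`, `log (1 + u) ≥ u/2` dominates it by `exp (-a b / (2σ))`,
where `a b = m min zᵢ` does not depend on `ξ`. On `σ ≤ a`, `(1 + u)² ≥ 4u` bounds it by a power of
`σ` whose integral `2^(1-b) a^(-m) / b` stays bounded because `ξ 2^(1/ξ) ≥ log 2`.
-/

lemma integrableOn_rpow_neg_mul_exp_neg_div {r c : ℝ} (hr : 1 < r) (hc : 0 < c) :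
    IntegrableOn (fun σ : ℝ => σ ^ (-r) * exp (-c / σ)) (Ioi 0) := by
  -- `σ ↦ σ⁻¹` turns this into the Gamma-type integrand `y ^ (r - 2) * exp (-c * y)`.
  have h := (integrableOn_Ioi_comp_rpow_iff' (fun y : ℝ => y ^ (r - 2) * exp (-c * y ^ (1 : ℝ)))
    (p := -1) (by norm_num)).2 (integrableOn_rpow_mul_exp_neg_mul_rpow (by linarith) one_pos hc)
  refine h.congr_fun (fun σ (hσ : 0 < σ) => ?_) measurableSet_Ioi
  simp only [smul_eq_mul, rpow_one]
  rw [← rpow_mul hσ.le, ← mul_assoc, ← rpow_add hσ, rpow_neg_one, div_eq_mul_inv]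
  ring_nf

lemma lintegral_Ioc_rpow_sub_one {a p : ℝ} (ha : 0 < a) (hp : 0 < p) :
    ∫⁻ σ in Ioc 0 a, ENNReal.ofReal (σ ^ (p - 1)) = ENNReal.ofReal (a ^ p / p) := by
  have hint : IntegrableOn (fun σ : ℝ => σ ^ (p - 1)) (Ioc 0 a) :=
    (intervalIntegral.intervalIntegrable_rpow' (by linarith : (-1 : ℝ) < p - 1)).1
  rw [← ofReal_integral_eq_lintegral_ofReal hint
    (ae_restrict_of_forall_mem measurableSet_Ioc fun σ hσ => rpow_nonneg hσ.1.le _),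
    ← intervalIntegral.integral_of_le ha.le, integral_rpow (Or.inl (by linarith)),
    sub_add_cancel, zero_rpow hp.ne', sub_zero]

lemma one_add_div_rpow_neg_le_exp {a b r σ : ℝ} (ha : 0 < a) (hb : 0 ≤ b) (hr : 0 ≤ r)
    (hσ : a ≤ σ) : (1 + a / σ) ^ (-(r + b)) ≤ exp (-(a * b / 2) / σ) := by
  have hσ₀ : 0 < σ := ha.trans_le hσ
  have hu : 0 < a / σ := div_pos ha hσ₀
  have hu₁ : a / σ ≤ 1 := (div_le_one hσ₀).2 hσ
  have hlog : a / σ / 2 ≤ log (1 + a / σ) := by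
    refine le_trans ?_ (le_log_one_add_of_nonneg hu.le)
    rw [div_le_div_iff₀ two_pos (by linarith)]
    nlinarith
  rw [rpow_def_of_pos (by linarith), exp_le_exp,
    show -(a * b / 2) / σ = -(b * (a / σ / 2)) by ring]
  nlinarith [mul_le_mul_of_nonneg_left hlog hb,
    mul_nonneg hr (by linarith : 0 ≤ log (1 + a / σ))]

lemma rpow_mul_one_add_div_rpow_le {a b r σ : ℝ} (ha : 0 < a) (hb : 0 ≤ b) (hr : 0 ≤ r)
    (hσ : 0 < σ) :
    σ ^ (-(r + 1)) * (1 + a / σ) ^ (-(r + b))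
      ≤ 2 ^ (-b) * a ^ (-(r + b / 2)) * σ ^ (b / 2 - 1) := by
  have hu : 0 < a / σ := div_pos ha hσ
  have hlog : log (a / σ) ≤ log (1 + a / σ) := log_le_log hu (by linarith)
  have hsq : log 4 + log (a / σ) ≤ 2 * log (1 + a / σ) := by
    rw [← log_mul (by norm_num) hu.ne',
      show 2 * log (1 + a / σ) = log ((1 + a / σ) ^ 2) by rw [log_pow]; norm_num]
    exact log_le_log (by positivity) (by nlinarith [sq_nonneg (1 - a / σ)])
  have hlog4 : log 4 = 2 * log 2 := by
    rw [show (4 : ℝ) = 2 ^ 2 by norm_num, log_pow]; norm_num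
  rw [log_div ha.ne' hσ.ne'] at hlog hsq
  rw [rpow_def_of_pos hσ, rpow_def_of_pos hσ, rpow_def_of_pos ha, rpow_def_of_pos two_pos,
    rpow_def_of_pos (by linarith : 0 < 1 + a / σ), ← exp_add, ← exp_add, ← exp_add, exp_le_exp]
  nlinarith [mul_nonneg hr (sub_nonneg.2 hlog), mul_nonneg hb (sub_nonneg.2 hsq)]

lemma one_add_mul_rpow_le_exp {ξ x : ℝ} (hξ₁ : -1 ≤ ξ) (hξ₀ : ξ < 0) (hx : 0 < 1 + ξ * x) :
    (1 + ξ * x) ^ (-(1 + 1 / ξ)) ≤ exp (-((1 + ξ) * x)) := by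
  have hexp : 0 ≤ -(1 + 1 / ξ) := by
    have : 1 / ξ ≤ -1 := by rw [div_le_iff_of_neg hξ₀]; linarith
    linarith
  rw [rpow_def_of_pos hx, exp_le_exp]
  calc log (1 + ξ * x) * -(1 + 1 / ξ) ≤ ξ * x * -(1 + 1 / ξ) :=
        mul_le_mul_of_nonneg_right (by linarith [log_le_sub_one_of_pos hx]) hexp
    _ = -((1 + ξ) * x) := by field_simp [hξ₀.ne]; ring

lemma rpow_one_sub_mul_two_rpow_neg_div_le {ξ m : ℝ} (hξ : 0 < ξ) (hm : 1 ≤ m) :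
    ξ ^ (1 - m) * 2 ^ (-(m / ξ)) ≤ log 2 ^ (1 - m) := by
  have hlog2 : 0 < log 2 := log_pos one_lt_two
  have hlog2_le : log 2 ≤ ξ * 2 ^ (1 / ξ) := by
    rw [rpow_def_of_pos two_pos]
    calc log 2 = ξ * (log 2 * (1 / ξ)) := by field_simp
      _ ≤ _ := by gcongr; linarith [add_one_le_exp (log 2 * (1 / ξ))]
  calc ξ ^ (1 - m) * 2 ^ (-(m / ξ)) = (ξ * 2 ^ (1 / ξ)) ^ (1 - m) * 2 ^ (-(1 / ξ)) := by
        rw [mul_rpow hξ.le (by positivity), ← rpow_mul two_pos.le, mul_assoc,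
          ← rpow_add two_pos]
        congr 2; ring
    _ ≤ log 2 ^ (1 - m) * 1 :=
        mul_le_mul (rpow_le_rpow_of_nonpos hlog2 hlog2_le (by linarith))
          (rpow_le_one_of_one_le_of_nonpos one_le_two (by have := one_div_pos.2 hξ; linarith))
          (by positivity) (by positivity)
    _ = _ := mul_one _

lemma lintegral_Ioc_rpow_mul_one_add_div_rpow_le {a b r : ℝ} (ha : 0 < a) (hb : 0 < b)
    (hr : 0 ≤ r) :
    ∫⁻ σ in Ioc 0 a, ENNReal.ofReal (σ ^ (-(r + 1)) * (1 + a / σ) ^ (-(r + b)))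
      ≤ ENNReal.ofReal (2 ^ (-b) * a ^ (-r) * (2 / b)) := by
  calc _ ≤ ∫⁻ σ in Ioc 0 a, ENNReal.ofReal (2 ^ (-b) * a ^ (-(r + b / 2)))
          * ENNReal.ofReal (σ ^ (b / 2 - 1)) := by
        refine setLIntegral_mono' measurableSet_Ioc fun σ hσ => ?_
        rw [← ENNReal.ofReal_mul (by positivity)]
        exact ENNReal.ofReal_le_ofReal (rpow_mul_one_add_div_rpow_le ha hb.le hr hσ.1)
    _ = ENNReal.ofReal (2 ^ (-b) * a ^ (-(r + b / 2)))
          * ENNReal.ofReal (a ^ (b / 2) / (b / 2)) := by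
        rw [lintegral_const_mul' _ _ ENNReal.ofReal_ne_top,
          lintegral_Ioc_rpow_sub_one ha (half_pos hb)]
    _ = _ := by
        rw [← ENNReal.ofReal_mul (by positivity), show -r = -(r + b / 2) + b / 2 by ring,
          rpow_add ha]
        congr 1
        field_simp

lemma lintegral_Ioi_rpow_mul_one_add_div_rpow_le {a b r : ℝ} (ha : 0 < a) (hb : 0 < b)
    (hr : 0 ≤ r) :
    ∫⁻ σ in Ioi 0, ENNReal.ofReal (σ ^ (-(r + 1)) * (1 + a / σ) ^ (-(r + b)))
      ≤ ENNReal.ofReal (2 ^ (-b) * a ^ (-r) * (2 / b))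
        + ∫⁻ σ in Ioi 0, ENNReal.ofReal (σ ^ (-(r + 1)) * exp (-(a * b / 2) / σ)) := by
  calc _ = ∫⁻ σ in Ioc 0 a ∪ Ioi a,
          ENNReal.ofReal (σ ^ (-(r + 1)) * (1 + a / σ) ^ (-(r + b))) := by
        rw [Ioc_union_Ioi_eq_Ioi ha.le]
    _ ≤ _ := lintegral_union_le _ _ _
    _ ≤ _ := by
        refine add_le_add (lintegral_Ioc_rpow_mul_one_add_div_rpow_le ha hb hr)
          ((setLIntegral_mono' measurableSet_Ioi fun σ hσ => ?_).trans
            (lintegral_mono_set (Ioi_subset_Ioi ha.le)))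
        exact ENNReal.ofReal_le_ofReal <| mul_le_mul_of_nonneg_left
          (one_add_div_rpow_neg_le_exp ha hb.le hr (le_of_lt hσ))
          (rpow_nonneg (ha.trans hσ).le _)

lemma gpInner_le_of_prod_le {m : ℕ} {z : Fin m → ℝ} {ξ : ℝ} (hξ : ξ ≠ 0) {g : ℝ → ℝ}
    (hg : ∀ σ, max 0 (-ξ * ⨆ i, z i) < σ → ∏ i, (1 + ξ * z i / σ) ^ (-(1 + 1 / ξ)) ≤ g σ) :
    gpInner m z ξ ≤ ∫⁻ σ in Ioi (max 0 (-ξ * ⨆ i, z i)),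
      ENNReal.ofReal (σ ^ (-((m : ℝ) + 1)) * g σ) := by
  refine setLIntegral_mono' measurableSet_Ioi fun σ hσ => ?_
  rw [if_neg hξ]
  exact ENNReal.ofReal_le_ofReal (mul_le_mul_of_nonneg_left (hg σ hσ)
    (rpow_nonneg ((le_max_left _ _).trans hσ.le) _))

lemma gpInner_le_of_neg {m : ℕ} (z : Fin m → ℝ) {ξ : ℝ} (hξ₁ : -1 ≤ ξ) (hξ₀ : ξ < 0) :
    gpInner m z ξ ≤ ∫⁻ σ in Ioi (max 0 (-ξ * ⨆ i, z i)),
      ENNReal.ofReal (σ ^ (-((m : ℝ) + 1)) * exp (-((1 + ξ) * ∑ i, z i) / σ)) := by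
  refine gpInner_le_of_prod_le hξ₀.ne fun σ hσ => ?_
  have hσ₀ : 0 < σ := (le_max_left _ _).trans_lt hσ
  have hbase : ∀ i, 0 < 1 + ξ * (z i / σ) := fun i => by
    have hzi : z i ≤ ⨆ j, z j := le_ciSup (finite_range z).bddAbove i
    have : 0 < (σ + ξ * z i) / σ :=
      div_pos (by nlinarith [le_max_right 0 (-ξ * ⨆ j, z j)]) hσ₀
    rwa [add_div, div_self hσ₀.ne', mul_div_assoc] at this
  calc ∏ i, (1 + ξ * z i / σ) ^ (-(1 + 1 / ξ)) ≤ ∏ i, exp (-((1 + ξ) * (z i / σ))) := by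
        refine Finset.prod_le_prod (fun i _ => rpow_nonneg ?_ _) fun i _ => ?_
        · rw [mul_div_assoc]; exact (hbase i).le
        · rw [mul_div_assoc]; exact one_add_mul_rpow_le_exp hξ₁ hξ₀ (hbase i)
    _ = exp (-((1 + ξ) * ∑ i, z i) / σ) := by
        rw [← exp_sum, neg_div, Finset.mul_sum, Finset.sum_div, ← Finset.sum_neg_distrib]
        simp only [mul_div_assoc]

lemma gpInner_le_of_pos {m : ℕ} {z : Fin m → ℝ} {w ξ : ℝ} (hw : 0 < w) (hwz : ∀ i, w ≤ z i)
    (hξ : 0 < ξ) :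
    gpInner m z ξ ≤ ∫⁻ σ in Ioi 0,
      ENNReal.ofReal (σ ^ (-((m : ℝ) + 1)) * (1 + ξ * w / σ) ^ (-((m : ℝ) + m / ξ))) := by
  refine (gpInner_le_of_prod_le hξ.ne' fun σ hσ => ?_).trans
    (lintegral_mono_set (Ioi_subset_Ioi (le_max_left _ _)))
  have hσ₀ : 0 < σ := (le_max_left _ _).trans_lt hσ
  have hbase : 0 < 1 + ξ * w / σ := by positivity
  calc ∏ i, (1 + ξ * z i / σ) ^ (-(1 + 1 / ξ))
      ≤ ∏ _i : Fin m, (1 + ξ * w / σ) ^ (-(1 + 1 / ξ)) := by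
        refine Finset.prod_le_prod (fun i _ => rpow_nonneg ?_ _) fun i _ => ?_
        · have := hw.trans_le (hwz i); positivity
        · exact rpow_le_rpow_of_nonpos hbase (by gcongr; exact hwz i)
            (by have := one_div_pos.2 hξ; linarith)
    _ = _ := by
        rw [Finset.prod_const, Finset.card_univ, Fintype.card_fin, ← rpow_mul_natCast hbase.le]
        congr 1
        field_simp

section

variable {m : ℕ} (hm : 1 ≤ m) {z : Fin m → ℝ} (hz : ∀ i, 0 < z i)
include hm hz

lemma gpInner_zero_lt_top : gpInner m z 0 < ∞ := by
  have hS : 0 < ∑ i, z i := Finset.sum_pos (fun i _ => hz i) ⟨⟨0, hm⟩, Finset.mem_univ _⟩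
  simpa [gpInner] using (integrableOn_rpow_neg_mul_exp_neg_div (r := m + 1)
    (lt_add_of_pos_left 1 (Nat.cast_pos.2 hm)) hS).lintegral_lt_top

lemma exists_gpInner_le_of_neg : ∃ C < ∞, ∀ ξ, -1 ≤ ξ → ξ < 0 → gpInner m z ξ ≤ C := by
  set Z := ⨆ i, z i
  set S := ∑ i, z i
  have hZ : 0 < Z := (hz ⟨0, hm⟩).trans_le (le_ciSup (finite_range z).bddAbove _)
  have hS : 0 < S := Finset.sum_pos (fun i _ => hz i) ⟨⟨0, hm⟩, Finset.mem_univ _⟩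
  have hm' : (1 : ℝ) ≤ m := by exact_mod_cast hm
  refine ⟨(∫⁻ σ in Ioi (Z / 2), ENNReal.ofReal (σ ^ (-((m : ℝ) + 1))))
      + ∫⁻ σ in Ioi 0, ENNReal.ofReal (σ ^ (-((m : ℝ) + 1)) * exp (-(S / 2) / σ)),
    ENNReal.add_lt_top.2
      ⟨(integrableOn_Ioi_rpow_of_lt (by linarith) (half_pos hZ)).lintegral_lt_top,
        (integrableOn_rpow_neg_mul_exp_neg_div (by linarith) (half_pos hS)).lintegral_lt_top⟩,
    fun ξ hξ₁ hξ₀ => (gpInner_le_of_neg z hξ₁ hξ₀).trans ?_⟩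
  rcases le_or_gt ξ (-1 / 2) with hξ | hξ
  · refine le_add_right ((setLIntegral_mono' measurableSet_Ioi fun σ hσ => ?_).trans
      (lintegral_mono_set (Ioi_subset_Ioi (le_max_of_le_right (by nlinarith)))))
    have hσ₀ : 0 < σ := (le_max_left _ _).trans_lt hσ
    refine ENNReal.ofReal_le_ofReal (mul_le_of_le_one_right (rpow_nonneg hσ₀.le _) ?_)
    exact exp_le_one_iff.2 (div_nonpos_of_nonpos_of_nonneg (by nlinarith) hσ₀.le)
  · refine le_add_left ((setLIntegral_mono' measurableSet_Ioi fun σ hσ => ?_).trans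
      (lintegral_mono_set (Ioi_subset_Ioi (le_max_left _ _))))
    have hσ₀ : 0 < σ := (le_max_left _ _).trans_lt hσ
    refine ENNReal.ofReal_le_ofReal (mul_le_mul_of_nonneg_left ?_ (rpow_nonneg hσ₀.le _))
    exact exp_le_exp.2 (div_le_div_of_nonneg_right (by nlinarith) hσ₀.le)

lemma exists_gpInner_le_of_pos : ∃ C < ∞, ∀ ξ, 0 < ξ → gpInner m z ξ ≤ C := by
  have : Nonempty (Fin m) := ⟨⟨0, hm⟩⟩
  obtain ⟨i₀, hi₀⟩ := Finite.exists_min z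
  set w := z i₀
  have hw : 0 < w := hz i₀
  have hm' : (1 : ℝ) ≤ m := by exact_mod_cast hm
  refine ⟨ENNReal.ofReal (2 * w ^ (-(m : ℝ)) / m * log 2 ^ (1 - (m : ℝ)))
      + ∫⁻ σ in Ioi 0, ENNReal.ofReal (σ ^ (-((m : ℝ) + 1)) * exp (-(m * w / 2) / σ)),
    ENNReal.add_lt_top.2 ⟨ENNReal.ofReal_lt_top,
      (integrableOn_rpow_neg_mul_exp_neg_div (by linarith) (by positivity)).lintegral_lt_top⟩,
    fun ξ hξ => ?_⟩
  have hab : ξ * w * (m / ξ) = m * w := by field_simp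
  calc gpInner m z ξ ≤ _ := gpInner_le_of_pos hw hi₀ hξ
    _ ≤ _ := lintegral_Ioi_rpow_mul_one_add_div_rpow_le (by positivity) (by positivity)
        (Nat.cast_nonneg m)
    _ ≤ _ := by
      rw [hab]
      refine add_le_add (ENNReal.ofReal_le_ofReal ?_) le_rfl
      calc 2 ^ (-(m / ξ)) * (ξ * w) ^ (-(m : ℝ)) * (2 / (m / ξ))
          = 2 * w ^ (-(m : ℝ)) / m * (ξ ^ (1 - (m : ℝ)) * 2 ^ (-(m / ξ))) := by
            rw [mul_rpow hξ.le hw.le, sub_eq_add_neg, rpow_add hξ, rpow_one]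
            field_simp
        _ ≤ _ := by gcongr; exact rpow_one_sub_mul_two_rpow_neg_div_le hξ hm'

lemma exists_gpInner_le : ∃ C < ∞, ∀ ξ, -1 ≤ ξ → gpInner m z ξ ≤ C := by
  obtain ⟨C₁, hC₁, h₁⟩ := exists_gpInner_le_of_neg hm hz
  obtain ⟨C₂, hC₂, h₂⟩ := exists_gpInner_le_of_pos hm hz
  refine ⟨C₁ + gpInner m z 0 + C₂,
    ENNReal.add_lt_top.2 ⟨ENNReal.add_lt_top.2 ⟨hC₁, gpInner_zero_lt_top hm hz⟩, hC₂⟩,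
    fun ξ hξ => ?_⟩
  rcases lt_trichotomy ξ 0 with h | rfl | h
  · exact (h₁ ξ hξ h).trans (le_add_right le_self_add)
  · exact le_add_right le_add_self
  · exact (h₂ ξ h).trans le_add_self

lemma gpC_lt_top_of_integrable {p : ℝ → ℝ} (hp : Integrable p) (hsupp : ∀ ξ < -1, p ξ = 0) :
    gpC m z p < ∞ := by
  obtain ⟨C, hC, hbdd⟩ := exists_gpInner_le hm hz
  calc gpC m z p ≤ ∫⁻ ξ, ENNReal.ofReal (p ξ) * C := lintegral_mono fun ξ => by
        rcases lt_or_ge ξ (-1) with h | h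
        · simp [hsupp ξ h]
        · gcongr; exact hbdd ξ h
    _ = (∫⁻ ξ, ENNReal.ofReal (p ξ)) * C := lintegral_mul_const' _ _ hC.ne
    _ < ∞ := ENNReal.mul_lt_top hp.lintegral_lt_top hC

end

lemma integrable_truncated_exp_neg :
    Integrable fun ξ : ℝ => if -1 ≤ ξ then exp (-(ξ + 1)) else 0 := by
  have : (fun ξ : ℝ => if -1 ≤ ξ then exp (-(ξ + 1)) else 0)
      = (Ici (-1)).indicator fun ξ => exp (-1) * exp (-1 * ξ) := by
    ext ξ
    simp only [indicator, mem_Ici, ← exp_add]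
    ring_nf
  rw [this, integrable_indicator_iff measurableSet_Ici, integrableOn_Ici_iff_integrableOn_Ioi]
  exact (exp_neg_integrableOn_Ioi (-1) one_pos).const_mul _

theorem gp_truncated_MDI_proper
    (m : ℕ) (hm : 1 ≤ m) (z : Fin m → ℝ)
    (hzpos : ∀ i, 0 < z i) :
    gpC m z (fun ξ => if -1 ≤ ξ then Real.exp (-(ξ + 1)) else 0) < ⊤ := by
  exact gpC_lt_top_of_integrable hm hzpos integrable_truncated_exp_neg
    fun ξ hξ => if_neg (by linarith)
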